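/- arXiv:2201.12453 — 3 statements merged into one kernel-verified Lean document; each statement's English description precedes it below -/
import Mathlib

section
/- If x = a·p^{b·p^k} is a nonzero integer with p ∤ ab and 1 ≤ k ≤ p, then the sequence ord_p(D_p^i(x)) for i ≥ 0 is periodic with period dividing k; in particular ord_p(D_p^{k}(x)) = ord_p(x) = b·p^k. -/
def Dp (p : ℕ) (x : ℤ) : ℤ := (x / p) * padicValInt p x

/-! If `ord_p x = m ≥ 1`, then `D_p x = (x / p) · m` has valuation `m - 1 + ord_p m`; so `ord_p`
semiconjugates `D_p` to `s m = m - 1 + ord_p m` on all of `ℤ`. For `N = b p^k`, `s N = N + k - 1`,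
and since `p ∤ N + j` for `0 < j < k ≤ p`, the next `k - 1` steps of `s` count down to `N`: the
orbit of `N` under `s` is a cycle of length `k`. -/

open Function

section

variable {p : ℕ}

lemma padicValInt_mul_pow_of_not_dvd [Fact p.Prime] {c : ℤ} (hc : ¬ (p : ℤ) ∣ c) (m : ℕ) :
    padicValInt p (c * (p : ℤ) ^ m) = m := by
  have hc0 : c ≠ 0 := by rintro rfl; exact hc (dvd_zero _)
  rw [padicValInt.mul hc0 (pow_ne_zero _ (by exact_mod_cast (Fact.out : p.Prime).ne_zero)),
    padicValInt.eq_zero_of_not_dvd hc, ← Nat.cast_pow, padicValInt.of_nat,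
    padicValNat.prime_pow, zero_add]

-- At `m = 0` the truncated subtraction gives `0`, matching `D_p x = 0` when `p ∤ x`.
def ordStep (p m : ℕ) : ℕ := m - 1 + padicValNat p m

lemma padicValInt_Dp [Fact p.Prime] (x : ℤ) :
    padicValInt p (Dp p x) = ordStep p (padicValInt p x) := by
  set m := padicValInt p x with hm
  rcases Nat.eq_zero_or_pos m with h0 | hpos
  · simp [Dp, ← hm, h0, ordStep]
  have hdvd : (p : ℤ) ∣ x := (dvd_pow_self _ hpos.ne').trans (padicValInt_dvd x)
  have hx : x / p * p = x := Int.ediv_mul_cancel hdvd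
  have hq0 : x / p ≠ 0 := by
    intro hq
    rw [hq, zero_mul] at hx
    simp [← hx] at hm
    omega
  have hq : padicValInt p (x / p) + 1 = m := by rw [← padicValInt_mul_eq_succ _ hq0, hx]
  rw [Dp, ← hm, padicValInt.mul hq0 (by exact_mod_cast hpos.ne'), padicValInt.of_nat, ordStep]
  omega

lemma semiconj_padicValInt_Dp [Fact p.Prime] : Semiconj (padicValInt p) (Dp p) (ordStep p) :=
  padicValInt_Dp

lemma ordStep_add_of_lt {N j : ℕ} (hN : p ∣ N) (hj : 0 < j) (hjp : j < p) :
    ordStep p (N + j) = N + j - 1 := by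
  have hndvd : ¬ p ∣ N + j := fun h =>
    absurd (Nat.le_of_dvd hj ((Nat.dvd_add_right hN).mp h)) (by omega)
  rw [ordStep, padicValNat.eq_zero_of_not_dvd hndvd, add_zero]

lemma iterate_ordStep_add {N j : ℕ} (hN : p ∣ N) (hjp : j < p) :
    (ordStep p)^[j] (N + j) = N := by
  induction j with
  | zero => rfl
  | succ j ih =>
    rw [iterate_succ_apply, ordStep_add_of_lt hN j.succ_pos hjp, Nat.add_succ_sub_one]
    exact ih (by omega)

lemma isPeriodicPt_ordStep [Fact p.Prime] {b k : ℕ} (hb : ¬ p ∣ b) (hkp : k ≤ p) :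
    IsPeriodicPt (ordStep p) k (b * p ^ k) := by
  cases k with
  | zero => exact isPeriodicPt_zero _ _
  | succ j =>
    have hN : p ∣ b * p ^ (j + 1) := dvd_mul_of_dvd_right (dvd_pow_self p j.succ_ne_zero) b
    have hN0 : b * p ^ (j + 1) ≠ 0 := mul_ne_zero (by rintro rfl; exact hb (dvd_zero p))
      (pow_ne_zero _ (Fact.out : p.Prime).ne_zero)
    have hstep : ordStep p (b * p ^ (j + 1)) = b * p ^ (j + 1) + j := by
      rw [ordStep, padicValNat.mul (left_ne_zero_of_mul hN0) (right_ne_zero_of_mul hN0),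
        padicValNat.eq_zero_of_not_dvd hb, padicValNat.prime_pow]
      omega
    show (ordStep p)^[j + 1] _ = _
    rw [iterate_succ_apply, hstep, iterate_ordStep_add hN (by omega)]

end

theorem ord_periodic_of_small_k_general (p : ℕ) (hp : p.Prime) (a : ℤ) (b k : ℕ)
    (ha : ¬ (p : ℤ) ∣ a) (hbp : ¬ p ∣ b)
    (hkp : k ≤ p) :
    (∀ i : ℕ, padicValInt p ((Dp p)^[i + k] (a * (p : ℤ) ^ (b * p ^ k))) =
        padicValInt p ((Dp p)^[i] (a * (p : ℤ) ^ (b * p ^ k)))) ∧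
    padicValInt p ((Dp p)^[k] (a * (p : ℤ) ^ (b * p ^ k))) = b * p ^ k := by
  have : Fact p.Prime := ⟨hp⟩
  have hval (i : ℕ) :
      padicValInt p ((Dp p)^[i] (a * (p : ℤ) ^ (b * p ^ k))) = (ordStep p)^[i] (b * p ^ k) := by
    rw [semiconj_padicValInt_Dp.iterate_right i, padicValInt_mul_pow_of_not_dvd ha]
  have hper := isPeriodicPt_ordStep hbp hkp
  exact ⟨fun i => by rw [hval, hval, iterate_add_apply, hper.eq], by rw [hval, hper.eq]⟩

theorem ord_periodic_of_small_k (p : ℕ) (hp : p.Prime) (a : ℤ) (b k : ℕ)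
    (ha : ¬ (p : ℤ) ∣ a) (ha0 : a ≠ 0) (hb : 0 < b) (hbp : ¬ p ∣ b)
    (hk1 : 1 ≤ k) (hkp : k ≤ p) :
    (∀ i : ℕ, padicValInt p ((Dp p)^[i + k] (a * (p : ℤ) ^ (b * p ^ k))) =
        padicValInt p ((Dp p)^[i] (a * (p : ℤ) ^ (b * p ^ k)))) ∧
    padicValInt p ((Dp p)^[k] (a * (p : ℤ) ^ (b * p ^ k))) = b * p ^ k :=
  ord_periodic_of_small_k_general p hp a b k ha hbp hkp
end

section
/- Let x_1 = a_1·p^{b_1·p^{k_1}} and x_2 = a_2·p^{b_2·p^{k_2}} be nonzero integers in standard form (p ∤ a_1 b_1, p ∤ a_2 b_2, b_1, b_2 > 0, k_1, k_2 ≥ 0) with D_p(x_1) = D_p(x_2). Then the following are equivalent: (i) k_1 < k_2; (ii) b_1·p^{k_1} > b_2·p^{k_2}; (iii) b_1 > b_2. -/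
section Valuation

variable {p : ℕ} [hp : Fact p.Prime]

theorem padicValInt_mul_pow_of_not_dvd_s13 {a : ℤ} (ha : ¬(p : ℤ) ∣ a) (n : ℕ) :
    padicValInt p (a * (p : ℤ) ^ n) = n := by
  have ha0 : a ≠ 0 := fun h => ha (h ▸ dvd_zero _)
  rw [padicValInt.mul ha0 (pow_ne_zero _ (by exact_mod_cast hp.out.ne_zero)),
    padicValInt.eq_zero_of_not_dvd ha, ← Nat.cast_pow, padicValInt.of_nat,
    padicValNat.prime_pow, zero_add]

theorem padicValNat_mul_pow_of_not_dvd {b : ℕ} (hb : ¬p ∣ b) (k : ℕ) :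
    padicValNat p (b * p ^ k) = k := by
  have hb0 : b ≠ 0 := fun h => hb (h ▸ dvd_zero _)
  rw [padicValNat.mul hb0 (pow_ne_zero _ hp.out.ne_zero), padicValNat.eq_zero_of_not_dvd hb,
    padicValNat.prime_pow, zero_add]

theorem Dp_mul_pow_succ {a : ℤ} (ha : ¬(p : ℤ) ∣ a) (n : ℕ) :
    Dp p (a * (p : ℤ) ^ (n + 1)) = a * (p : ℤ) ^ n * (n + 1 : ℕ) := by
  have hp0 : (p : ℤ) ≠ 0 := by exact_mod_cast hp.out.ne_zero
  rw [Dp, padicValInt_mul_pow_of_not_dvd_s13 ha, pow_succ, ← mul_assoc, Int.mul_ediv_cancel _ hp0]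

theorem padicValInt_Dp_mul_pow {a : ℤ} (ha : ¬(p : ℤ) ∣ a) {n : ℕ} (hn : n ≠ 0) :
    padicValInt p (Dp p (a * (p : ℤ) ^ n)) = n - 1 + padicValNat p n := by
  obtain ⟨m, rfl⟩ := Nat.exists_eq_succ_of_ne_zero hn
  have hpow0 : a * (p : ℤ) ^ m ≠ 0 :=
    mul_ne_zero (fun h => ha (h ▸ dvd_zero _)) (pow_ne_zero _ (by exact_mod_cast hp.out.ne_zero))
  rw [Dp_mul_pow_succ ha, padicValInt.mul hpow0 (by exact_mod_cast m.succ_ne_zero),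
    padicValInt_mul_pow_of_not_dvd_s13 ha, padicValInt.of_nat, Nat.succ_sub_one]

end Valuation

theorem lt_iff_lt_of_mul_pow_add_eq {p b₁ b₂ k₁ k₂ : ℕ} (hp : 0 < p)
    (h : b₁ * p ^ k₁ + k₁ = b₂ * p ^ k₂ + k₂) : k₁ < k₂ ↔ b₂ < b₁ := by
  constructor
  · intro hk
    have : b₂ * p ^ k₁ ≤ b₂ * p ^ k₂ := Nat.mul_le_mul_left _ (Nat.pow_le_pow_right hp hk.le)
    exact Nat.lt_of_mul_lt_mul_right (a := p ^ k₁) (by omega)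
  · intro hb
    by_contra! hk
    have : b₂ * p ^ k₂ ≤ b₂ * p ^ k₁ := Nat.mul_le_mul_left _ (Nat.pow_le_pow_right hp hk)
    have : b₂ * p ^ k₁ < b₁ * p ^ k₁ := Nat.mul_lt_mul_of_pos_right hb (Nat.pow_pos hp)
    omega

theorem tfae_k_b_general (p : ℕ) (hp : p.Prime)
    (a₁ a₂ : ℤ) (b₁ b₂ k₁ k₂ : ℕ)
    (ha₁ : ¬ (p : ℤ) ∣ a₁) (hb₁p : ¬ p ∣ b₁)
    (ha₂ : ¬ (p : ℤ) ∣ a₂) (hb₂p : ¬ p ∣ b₂)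
    (hD : Dp p (a₁ * (p : ℤ) ^ (b₁ * p ^ k₁)) = Dp p (a₂ * (p : ℤ) ^ (b₂ * p ^ k₂))) :
    (k₁ < k₂ ↔ b₂ * p ^ k₂ < b₁ * p ^ k₁) ∧ (k₁ < k₂ ↔ b₂ < b₁) := by
  have := Fact.mk hp
  have hn : ∀ {b : ℕ} (k : ℕ), ¬p ∣ b → b * p ^ k ≠ 0 := fun k hb =>
    mul_ne_zero (fun h => hb (h ▸ dvd_zero p)) (pow_ne_zero _ hp.ne_zero)
  have hval := congrArg (padicValInt p) hD
  rw [padicValInt_Dp_mul_pow ha₁ (hn k₁ hb₁p), padicValInt_Dp_mul_pow ha₂ (hn k₂ hb₂p),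
    padicValNat_mul_pow_of_not_dvd hb₁p, padicValNat_mul_pow_of_not_dvd hb₂p] at hval
  have key : b₁ * p ^ k₁ + k₁ = b₂ * p ^ k₂ + k₂ := by
    have := hn k₁ hb₁p; have := hn k₂ hb₂p; omega
  exact ⟨by omega, lt_iff_lt_of_mul_pow_add_eq hp.pos key⟩

theorem tfae_k_b (p : ℕ) (hp : p.Prime)
    (a₁ a₂ : ℤ) (b₁ b₂ k₁ k₂ : ℕ)
    (ha₁0 : a₁ ≠ 0) (ha₁ : ¬ (p : ℤ) ∣ a₁) (hb₁ : 0 < b₁) (hb₁p : ¬ p ∣ b₁)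
    (ha₂0 : a₂ ≠ 0) (ha₂ : ¬ (p : ℤ) ∣ a₂) (hb₂ : 0 < b₂) (hb₂p : ¬ p ∣ b₂)
    (hD : Dp p (a₁ * (p : ℤ) ^ (b₁ * p ^ k₁)) = Dp p (a₂ * (p : ℤ) ^ (b₂ * p ^ k₂))) :
    (k₁ < k₂ ↔ b₂ * p ^ k₂ < b₁ * p ^ k₁) ∧ (k₁ < k₂ ↔ b₂ < b₁) :=
  tfae_k_b_general p hp a₁ a₂ b₁ b₂ k₁ k₂ ha₁ hb₁p ha₂ hb₂p hD
end

section
/- For any prime p, D_p(p^{p^{p+1}+p}) = D_p((p^p + 1)·p^{p^{p+1}}); thus anti-partial derivatives are not unique. -/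
theorem padicValInt_mul_prime_pow {p : ℕ} [Fact p.Prime] {u : ℤ} (hu : ¬ (p : ℤ) ∣ u) (n : ℕ) :
    padicValInt p (u * (p : ℤ) ^ n) = n := by
  have hu0 : u ≠ 0 := by rintro rfl; exact hu (dvd_zero _)
  have hp0 : (p : ℤ) ^ n ≠ 0 := pow_ne_zero _ (by exact_mod_cast (Fact.out : p.Prime).ne_zero)
  rw [padicValInt.mul hu0 hp0, padicValInt.eq_zero_of_not_dvd hu, zero_add, ← Nat.cast_pow,
    padicValInt.of_nat, padicValNat.prime_pow]

/-- With `n - 1` truncated the formula also covers `n = 0`, where both sides vanish. -/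
theorem Dp_mul_prime_pow {p : ℕ} (hp : p.Prime) {u : ℤ} (hu : ¬ (p : ℤ) ∣ u) (n : ℕ) :
    Dp p (u * (p : ℤ) ^ n) = u * (p : ℤ) ^ (n - 1) * n := by
  have : Fact p.Prime := ⟨hp⟩
  rw [Dp, padicValInt_mul_prime_pow hu]
  rcases n with _ | m
  · simp
  · have hp0 : (p : ℤ) ≠ 0 := by exact_mod_cast hp.ne_zero
    rw [pow_succ, ← mul_assoc, Int.mul_ediv_cancel _ hp0, Nat.add_sub_cancel]

theorem not_prime_dvd_pow_self_add_one {p : ℕ} (hp : p.Prime) : ¬ (p : ℤ) ∣ (p : ℤ) ^ p + 1 := by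
  intro h
  have h1 : (p : ℤ) ∣ 1 := (dvd_add_right (dvd_pow_self _ hp.ne_zero)).mp h
  exact hp.one_lt.ne' (by exact_mod_cast Int.eq_one_of_dvd_one (by positivity) h1)

theorem antiderivative_not_unique (p : ℕ) (hp : p.Prime) :
    Dp p ((p : ℤ) ^ (p ^ (p + 1) + p)) = Dp p (((p : ℤ) ^ p + 1) * (p : ℤ) ^ (p ^ (p + 1))) := by
  set N := p ^ (p + 1) with hN
  have hN1 : 1 ≤ N := Nat.one_le_pow _ _ hp.pos
  have hp1 : ¬ (p : ℤ) ∣ 1 := by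
    rw [Int.natCast_dvd_ofNat, Nat.dvd_one]; exact hp.ne_one
  rw [← one_mul ((p : ℤ) ^ (N + p)), Dp_mul_prime_pow hp hp1,
    Dp_mul_prime_pow hp (not_prime_dvd_pow_self_add_one hp),
    show N + p - 1 = (N - 1) + p by omega, pow_add]
  -- `p ^ p * (N + p) = (p ^ p + 1) * N` because `N = p * p ^ p`
  have hNcast : (N : ℤ) = p * (p : ℤ) ^ p := by rw [hN]; push_cast; ring
  push_cast
  rw [hNcast]
  ring
end
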